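/- In a semi-cancellative coop, for any x, y either (x + y)/2 = x/2 + y/2 or x + y is the annihilator. -/
import Mathlib


/-- A pocrim: commutative monoid (z, ad) with residuation operation im,
    ordered by `x ≥ y iff im x y = z`. -/
class Pocrim (M : Type*) where
  z : M
  ad : M → M → M
  im : M → M → M
  ad_assoc : ∀ x y w : M, ad (ad x y) w = ad x (ad y w)
  ad_comm : ∀ x y : M, ad x y = ad y x
  ad_zero : ∀ x : M, ad x z = x
  ge_refl : ∀ x : M, im x x = z
  ge_trans : ∀ x y w : M, im x y = z → im y w = z → im x w = z
  ge_antisymm : ∀ x y : M, im x y = z → im y x = z → x = y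
  ad_mono : ∀ x y w : M, im x y = z → im (ad x w) (ad y w) = z
  ge_zero : ∀ x : M, im x z = z
  resid : ∀ x y w : M, (im (ad x y) w = z ↔ im x (im y w) = z)

namespace Pocrim

variable {M : Type*} [Pocrim M]

/-- `ge x y` means x ≥ y, i.e. x → y = 0. -/
def ge (x y : M) : Prop := im x y = z

end Pocrim

open Pocrim

/-- A hoop is a pocrim satisfying x + (x → y) = y + (y → x). -/
class Hoop (M : Type*) extends Pocrim M where
  cwc : ∀ x y : M, ad x (im x y) = ad y (im y x)

/-- A coop is a hoop with a halving operation satisfying x/2 = x/2 → x. -/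
class Coop (M : Type*) extends Hoop M where
  half : M → M
  half_ax : ∀ x : M, half x = im (half x) x

open Coop

section Aux

variable {M : Type*} [Pocrim M]

lemma aux_ge_ad_right (x y : M) : im (ad x y) y = z :=
  (resid x y y).mpr (by rw [ge_refl, ge_zero])

lemma aux_ge_ad_left (x y : M) : im (ad x y) x = z := by
  rw [ad_comm]; exact aux_ge_ad_right y x

lemma aux_ge_im_self (x y : M) : im y (im x y) = z :=
  (resid y x y).mp (aux_ge_ad_left y x)

lemma aux_ad_im_ge (x y : M) : im (ad x (im x y)) y = z := by
  rw [ad_comm]; exact (resid (im x y) x y).mpr (ge_refl _)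

lemma aux_im_ad (x y w : M) : im (ad x y) w = im x (im y w) := by
  apply Pocrim.ge_antisymm
  · apply (resid _ x (im y w)).mp
    apply (resid _ y w).mp
    rw [ad_assoc, ad_comm (im (ad x y) w) (ad x y)]
    exact aux_ad_im_ge (ad x y) w
  · apply (resid _ (ad x y) w).mp
    rw [← ad_assoc]
    have h1 : im (ad (im x (im y w)) x) (im y w) = z := by
      rw [ad_comm]; exact aux_ad_im_ge x (im y w)
    have h2 : im (ad (ad (im x (im y w)) x) y) (ad (im y w) y) = z :=
      ad_mono _ _ _ h1
    have h3 : im (ad (im y w) y) w = z := by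
      rw [ad_comm]; exact aux_ad_im_ge y w
    exact ge_trans _ _ _ h2 h3

lemma aux_two_add (a b : M) : ad (ad a b) (ad a b) = ad (ad a a) (ad b b) := by
  rw [ad_assoc, ← ad_assoc b a b, ad_comm b a, ad_assoc a b b, ← ad_assoc]

end Aux

section AuxCoop

variable {M : Type*} [Coop M]

lemma aux_half_ge (v : M) : im v (half v) = z := by
  rw [half_ax]; exact aux_ge_im_self (half v) v

lemma aux_half_add (v : M) : ad (half v) (half v) = v := by
  have h := Hoop.cwc (half v) v
  rw [← half_ax, aux_half_ge, ad_zero] at h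
  exact h

lemma aux_key (hsc : ∀ x y w : M, ad x y = ad x w → y ≠ w →
      (∀ u : M, ad u (ad x y) = ad x y))
    (t s : M) (hss : ad s s = t) :
    half t = s ∨ (∀ u : M, ad u t = t) := by
  have hcc : ad (half t) (half t) = t := aux_half_add t
  have hts : im t s = z := by rw [← hss]; exact aux_ge_ad_left s s
  have h1 : ad s (im s t) = ad s s := by
    rw [Hoop.cwc s t, hts, ad_zero, hss]
  by_cases hst : im s t = s
  · -- s is also a "self-residual half" of t
    have hpq : im (half t) s = im s (half t) := by
      calc im (half t) s = im (half t) (im s t) := by rw [hst]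
        _ = im (ad (half t) s) t := (aux_im_ad _ _ _).symm
        _ = im (ad s (half t)) t := by rw [ad_comm]
        _ = im s (im (half t) t) := aux_im_ad _ _ _
        _ = im s (half t) := by rw [← half_ax t]
    have h2 : ad (im s (half t)) (half t) = ad (im s (half t)) s := by
      have h := Hoop.cwc (half t) s
      rw [hpq] at h
      rw [ad_comm (im s (half t)) (half t), ad_comm (im s (half t)) s]
      exact h
    by_cases hcs : (half t : M) = s
    · exact Or.inl hcs
    · right
      have ann := hsc (im s (half t)) (half t) s h2 hcs
      have hgt : im t (ad (im s (half t)) (half t)) = z := by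
        have hc : im (half t) (im s (half t)) = z := aux_ge_im_self s (half t)
        have := ad_mono (half t) (im s (half t)) (half t) hc
        rwa [hcc] at this
      have hlt : im (ad (im s (half t)) (half t)) t = z := by
        rw [← ann t]; exact aux_ge_ad_left t _
      have hAt : ad (im s (half t)) (half t) = t :=
        Pocrim.ge_antisymm _ _ hlt hgt
      intro u
      rw [← hAt]; exact ann u
  · right
    intro u
    have h := hsc s (im s t) s h1 hst u
    rwa [h1, hss] at h

end AuxCoop

theorem semi_cancellative_coop_half_add {M : Type*} [Coop M]
    (hsc : ∀ x y w : M, ad x y = ad x w → y ≠ w → (∀ u : M, ad u (ad x y) = ad x y))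
    (x y : M) :
    half (ad x y) = ad (half x) (half y) ∨ (∀ u : M, ad u (ad x y) = ad x y) := by
  have hss : ad (ad (half x) (half y)) (ad (half x) (half y)) = ad x y := by
    rw [aux_two_add, aux_half_add, aux_half_add]
  exact aux_key hsc (ad x y) (ad (half x) (half y)) hss
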